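/- arXiv:2205.13892 — 3 statements merged into one kernel-verified Lean document; each statement's English description precedes it below -/
import Mathlib

section
/- Let p_1 = h and define recursively p_k = p_{k-2}(h^2 + (1-h)^2) + (1 - p_{k-2})·2h(1-h) for k ≥ 3 (odd) and similarly for even k starting from p_2 = h^2 + (1-h)^2. If h is uniformly distributed on [0,1], then for every odd k, the expectation E_h[p_k] = 1/2. -/
theorem expectation_pk_odd_eq_half
    (p : ℕ → ℝ → ℝ)
    (hp1 : ∀ h : ℝ, p 1 h = h)
    (hrec : ∀ (k : ℕ) (h : ℝ),
      p (k + 2) h = p k h * (h ^ 2 + (1 - h) ^ 2) + (1 - p k h) * (2 * h * (1 - h))) :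
    ∀ k : ℕ, Odd k → ∫ h in (0:ℝ)..1, p k h = 1 / 2 := by
  have key : ∀ n : ℕ, Continuous (p (2 * n + 1)) ∧
      ∀ h : ℝ, p (2 * n + 1) h + p (2 * n + 1) (1 - h) = 1 := by
    intro n
    induction n with
    | zero =>
      have hfun : p 1 = fun h => h := funext hp1
      refine ⟨by rw [show 2 * 0 + 1 = 1 from rfl, hfun]; exact continuous_id, ?_⟩
      intro h
      simp only [show 2 * 0 + 1 = 1 from rfl, hp1]; ring
    | succ n ih =>
      have h2 : 2 * (n + 1) + 1 = (2 * n + 1) + 2 := by ring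
      rw [h2]
      constructor
      · have hfun : p ((2 * n + 1) + 2) = fun h =>
            p (2 * n + 1) h * (h ^ 2 + (1 - h) ^ 2) +
              (1 - p (2 * n + 1) h) * (2 * h * (1 - h)) := funext (hrec _)
        rw [hfun]
        have hc := ih.1
        exact (hc.mul (by continuity)).add ((continuous_const.sub hc).mul (by continuity))
      · intro h
        rw [hrec, hrec]
        have hq := ih.2 h
        linear_combination ((h ^ 2 + (1 - h) ^ 2) - 2 * h * (1 - h)) * hq
  intro k hk
  obtain ⟨n, rfl⟩ := hk
  obtain ⟨hc, hs⟩ := key n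
  have hint : IntervalIntegrable (p (2 * n + 1)) MeasureTheory.volume 0 1 :=
    hc.intervalIntegrable 0 1
  have hint2 : IntervalIntegrable (fun h => p (2 * n + 1) (1 - h))
      MeasureTheory.volume 0 1 :=
    (hc.comp (continuous_const.sub continuous_id)).intervalIntegrable 0 1
  have heq : (∫ h in (0:ℝ)..1, p (2 * n + 1) (1 - h)) =
      ∫ h in (0:ℝ)..1, p (2 * n + 1) h := by
    have := intervalIntegral.integral_comp_sub_left (a := 0) (b := 1)
      (p (2 * n + 1)) 1
    simp at this; simpa using this
  have hsum : (∫ h in (0:ℝ)..1, (p (2 * n + 1) h + p (2 * n + 1) (1 - h))) = 1 := by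
    have hfun : (fun h => p (2 * n + 1) h + p (2 * n + 1) (1 - h)) =
        fun _ : ℝ => (1 : ℝ) := funext hs
    rw [hfun]; simp
  rw [intervalIntegral.integral_add hint hint2, heq] at hsum
  linarith
end

section
/- Let p_1 = h and p_k = p_{k-2}((1-h)^2 + h^2) + (1-p_{k-2})·2h(1-h). If h is uniformly distributed on [0,1], then for every even k ≥ 2, E_h[p_k] ≥ 1/2. -/
theorem expectation_pk_even_ge_half
    (p : ℕ → ℝ → ℝ)
    (hp1 : ∀ h : ℝ, p 1 h = h)
    (hp2 : ∀ h : ℝ, p 2 h = h ^ 2 + (1 - h) ^ 2)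
    (hrec : ∀ (k : ℕ) (h : ℝ),
      p (k + 2) h = p k h * ((1 - h) ^ 2 + h ^ 2) + (1 - p k h) * (2 * h * (1 - h))) :
    ∀ k : ℕ, Even k → 2 ≤ k → (1 : ℝ) / 2 ≤ ∫ h in (0:ℝ)..1, p k h := by
  have key : ∀ m : ℕ, Continuous (p (2 * m + 2)) ∧ ∀ h : ℝ, 1 / 2 ≤ p (2 * m + 2) h := by
    intro m
    induction m with
    | zero =>
      have he : p (2 * 0 + 2) = fun h : ℝ => h ^ 2 + (1 - h) ^ 2 := funext fun h => hp2 h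
      rw [he]
      constructor
      · continuity
      · intro h; nlinarith [sq_nonneg (2 * h - 1)]
    | succ n ih =>
      obtain ⟨ihc, ihb⟩ := ih
      have he : p (2 * (n + 1) + 2) =
          fun h : ℝ => p (2 * n + 2) h * ((1 - h) ^ 2 + h ^ 2) +
            (1 - p (2 * n + 2) h) * (2 * h * (1 - h)) := by
        funext h
        have : 2 * (n + 1) + 2 = (2 * n + 2) + 2 := by ring
        rw [this, hrec]
      rw [he]
      constructor
      · exact (ihc.mul (by continuity)).add ((continuous_const.sub ihc).mul (by continuity))
      · intro h
        have hq := ihb h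
        nlinarith [sq_nonneg (2 * h - 1), mul_nonneg (sub_nonneg.2 hq) (sq_nonneg (2 * h - 1))]
  intro k hk hk2
  obtain ⟨r, hr⟩ := hk
  obtain ⟨m, hm⟩ : ∃ m, k = 2 * m + 2 := by
    refine ⟨r - 1, ?_⟩
    omega
  subst hm
  obtain ⟨hc, hb⟩ := key m
  calc (1 : ℝ) / 2 = ∫ _ in (0:ℝ)..1, (1 / 2 : ℝ) := by simp
    _ ≤ ∫ h in (0:ℝ)..1, p (2 * m + 2) h := by
        apply intervalIntegral.integral_mono_on (by norm_num)
          intervalIntegrable_const (hc.intervalIntegrable _ _)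
        intro x _; exact hb x
end

section
/- Let N = 2n with n ≥ 1 and let U be the orthonormal eigenvector matrix of the Laplacian of the N-cycle, with eigenvector entries u_k(n') = sin(π(k+1)n'/N)/√(N/2) for odd k < N-1, u_k(n') = cos(πkn'/N)/√(N/2) for even k > 0, u_0(n') = 1/√N, and u_{N-1}(n') = cos(πn')/√N. Let δ = Uᵀ Δy₁ with Δy₁ = (1,-1,1,-1,…,1,-1)ᵀ and δ' = Uᵀ Δy₂ with Δy₂ = (1,1,…,1)ᵀ. Then δ_i = δ'_i for all 1 ≤ i ≤ N-2, while δ'_0 - δ_0 = √N and δ_{N-1} - δ'_{N-1} = √N. -/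
/-!
Up to the factor `√N`, `Δy₂` is the constant eigenvector `u₀` and `Δy₁` is the alternating
eigenvector `u_{N-1}`, so `δ'` and `δ` are their inner products with the rows of `U`. Every other
row is `sin` or `cos` of `2πjm/N` with `0 < j < N/2`, and multiplying by `(-1)^m` shifts `j` by
`N/2`; in both cases the sum over `m` is the real or imaginary part of a geometric sum of an
`N`-th root of unity different from `1`, hence vanishes.
-/

open Real Finset

theorem IsPrimitiveRoot.geom_sum_pow_eq_zero {R : Type*} [CommRing R] [IsDomain R] {ζ : R}
    {N j : ℕ} (hζ : IsPrimitiveRoot ζ N) (hj : ¬ N ∣ j) :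
    ∑ m ∈ range N, (ζ ^ j) ^ m = 0 := by
  refine eq_zero_of_ne_zero_of_mul_left_eq_zero (sub_ne_zero_of_ne (a := ζ ^ j) (b := 1) ?_) ?_
  · exact fun h => hj ((hζ.pow_eq_one_iff_dvd j).1 h)
  · rw [mul_geom_sum, ← pow_mul, mul_comm, pow_mul, hζ.pow_eq_one, one_pow, sub_self]

theorem sum_range_exp_two_pi_mul_div_mul_I_eq_zero {N j : ℕ} (hj : ¬ N ∣ j) :
    ∑ m ∈ range N, Complex.exp (↑(2 * π * j * m / N) * Complex.I) = 0 := by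
  rcases eq_or_ne N 0 with rfl | hN
  · simp
  rw [← (Complex.isPrimitiveRoot_exp N hN).geom_sum_pow_eq_zero hj]
  refine sum_congr rfl fun m _ => ?_
  rw [← Complex.exp_nat_mul, ← Complex.exp_nat_mul]
  push_cast
  ring_nf

theorem sum_range_cos_two_pi_mul_div_eq_zero {N j : ℕ} (hj : ¬ N ∣ j) :
    ∑ m ∈ range N, cos (2 * π * j * m / N) = 0 := by
  have h := congrArg Complex.re (sum_range_exp_two_pi_mul_div_mul_I_eq_zero hj)
  simpa only [Complex.re_sum, Complex.exp_ofReal_mul_I_re, Complex.zero_re] using h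

theorem sum_range_sin_two_pi_mul_div_eq_zero {N j : ℕ} (hj : ¬ N ∣ j) :
    ∑ m ∈ range N, sin (2 * π * j * m / N) = 0 := by
  have h := congrArg Complex.im (sum_range_exp_two_pi_mul_div_mul_I_eq_zero hj)
  simpa only [Complex.im_sum, Complex.exp_ofReal_mul_I_im, Complex.zero_im] using h

theorem two_pi_mul_add_half_mul_div {N n : ℕ} (hN : N = 2 * n) (hn : n ≠ 0) (j m : ℕ) :
    2 * π * (j + n : ℕ) * m / N = 2 * π * j * m / N + m * π := by
  subst hN
  push_cast
  field_simp

theorem cos_two_pi_mul_div_mul_neg_one_pow {N n : ℕ} (hN : N = 2 * n) (hn : n ≠ 0) (j m : ℕ) :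
    cos (2 * π * j * m / N) * (-1) ^ m = cos (2 * π * (j + n : ℕ) * m / N) := by
  rw [two_pi_mul_add_half_mul_div hN hn, cos_add_nat_mul_pi, mul_comm]

theorem sin_two_pi_mul_div_mul_neg_one_pow {N n : ℕ} (hN : N = 2 * n) (hn : n ≠ 0) (j m : ℕ) :
    sin (2 * π * j * m / N) * (-1) ^ m = sin (2 * π * (j + n : ℕ) * m / N) := by
  rw [two_pi_mul_add_half_mul_div hN hn, sin_add_nat_mul_pi, mul_comm]

noncomputable def cycleEigenvector (N k m : ℕ) : ℝ :=
  if k = 0 then 1 / √N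
  else if k = N - 1 then cos (π * m) / √N
  else if Odd k then sin (π * (k + 1) * m / N) / √(N / 2)
  else cos (π * k * m / N) / √(N / 2)

theorem sum_cycleEigenvector_of_middle {N n k : ℕ} (hN : N = 2 * n) (hk : 1 ≤ k)
    (hkN : k ≤ N - 2) :
    ∑ m ∈ range N, cycleEigenvector N k m = 0 ∧
      ∑ m ∈ range N, cycleEigenvector N k m * (-1) ^ m = 0 := by
  have hn : n ≠ 0 := by omega
  have hk0 : k ≠ 0 := by omega
  have hkN' : k ≠ N - 1 := by omega
  rcases Nat.even_or_odd' k with ⟨j, rfl | rfl⟩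
  · have hv (m : ℕ) : cycleEigenvector N (2 * j) m = cos (2 * π * j * m / N) / √(N / 2) := by
      simp only [cycleEigenvector, if_neg hk0, if_neg hkN', Nat.not_odd_iff_even.2 (even_two_mul j),
        if_false]
      push_cast
      ring_nf
    have hj : ¬ N ∣ j := Nat.not_dvd_of_pos_of_lt (by omega) (by omega)
    have hjn : ¬ N ∣ j + n := Nat.not_dvd_of_pos_of_lt (by omega) (by omega)
    simp only [hv, div_mul_eq_mul_div, ← sum_div, cos_two_pi_mul_div_mul_neg_one_pow hN hn,
      sum_range_cos_two_pi_mul_div_eq_zero hj, sum_range_cos_two_pi_mul_div_eq_zero hjn, zero_div,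
      and_self]
  · have hv (m : ℕ) :
        cycleEigenvector N (2 * j + 1) m = sin (2 * π * (j + 1 : ℕ) * m / N) / √(N / 2) := by
      simp only [cycleEigenvector, if_neg hk0, if_neg hkN', odd_two_mul_add_one j, if_true]
      push_cast
      ring_nf
    have hj : ¬ N ∣ j + 1 := Nat.not_dvd_of_pos_of_lt (by omega) (by omega)
    have hjn : ¬ N ∣ j + 1 + n := Nat.not_dvd_of_pos_of_lt (by omega) (by omega)
    simp only [hv, div_mul_eq_mul_div, ← sum_div, sin_two_pi_mul_div_mul_neg_one_pow hN hn,
      sum_range_sin_two_pi_mul_div_eq_zero hj, sum_range_sin_two_pi_mul_div_eq_zero hjn, zero_div,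
      and_self]

theorem sum_range_one_div_sqrt (N : ℕ) : ∑ _m ∈ range N, 1 / √N = √N := by
  rw [sum_const, card_range, nsmul_eq_mul, mul_one_div, div_sqrt]

theorem sum_range_neg_one_pow_div_sqrt {N : ℕ} (hN : Even N) :
    ∑ m ∈ range N, (-1) ^ m / √N = 0 := by
  rw [← sum_div, neg_one_geom_sum, if_pos hN, zero_div]

theorem sum_cycleEigenvector_zero {N : ℕ} (hN : Even N) :
    ∑ m ∈ range N, cycleEigenvector N 0 m = √N ∧
      ∑ m ∈ range N, cycleEigenvector N 0 m * (-1) ^ m = 0 := by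
  simp only [cycleEigenvector, if_pos, one_div_mul_eq_div, sum_range_one_div_sqrt,
    sum_range_neg_one_pow_div_sqrt hN, and_self]

theorem cycleEigenvector_last {N : ℕ} (hN : 2 ≤ N) (m : ℕ) :
    cycleEigenvector N (N - 1) m = (-1) ^ m / √N := by
  rw [cycleEigenvector, if_neg (by omega), if_pos rfl, mul_comm, cos_nat_mul_pi]

theorem sum_cycleEigenvector_last {N : ℕ} (hN : Even N) (hN2 : 2 ≤ N) :
    ∑ m ∈ range N, cycleEigenvector N (N - 1) m = 0 ∧
      ∑ m ∈ range N, cycleEigenvector N (N - 1) m * (-1) ^ m = √N := by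
  have hsq (m : ℕ) : (-1 : ℝ) ^ m / √N * (-1) ^ m = 1 / √N := by
    rw [div_mul_eq_mul_div, ← mul_pow, neg_one_mul, neg_neg, one_pow]
  simp only [cycleEigenvector_last hN2, hsq, sum_range_neg_one_pow_div_sqrt hN,
    sum_range_one_div_sqrt, and_self]

theorem ring_graph_spectra_agree_general {n : ℕ} (N : ℕ) (hN : N = 2 * n)
    (u : Fin N → Fin N → ℝ)
    (hu : ∀ k n' : Fin N,
      u k n' =
        if (k : ℕ) = 0 then 1 / Real.sqrt N
        else if (k : ℕ) = N - 1 then Real.cos (π * (n' : ℕ)) / Real.sqrt N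
        else if Odd (k : ℕ) then
          Real.sin (π * ((k : ℕ) + 1) * (n' : ℕ) / N) / Real.sqrt (N / 2)
        else Real.cos (π * (k : ℕ) * (n' : ℕ) / N) / Real.sqrt (N / 2))
    (Δy₁ Δy₂ : Fin N → ℝ)
    (hΔy₁ : ∀ i : Fin N, Δy₁ i = (-1 : ℝ) ^ (i : ℕ))
    (hΔy₂ : ∀ i : Fin N, Δy₂ i = 1)
    (δ δ' : Fin N → ℝ)
    (hδ : ∀ i, δ i = ∑ n', u i n' * Δy₁ n')
    (hδ' : ∀ i, δ' i = ∑ n', u i n' * Δy₂ n')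
    (i0 iN : Fin N) (hi0 : (i0 : ℕ) = 0) (hiN : (iN : ℕ) = N - 1) :
    (∀ i : Fin N, 1 ≤ (i : ℕ) → (i : ℕ) ≤ N - 2 → δ i = δ' i) ∧
    δ' i0 - δ i0 = Real.sqrt N ∧
    δ iN - δ' iN = Real.sqrt N := by
  have hNeven : Even N := ⟨n, by omega⟩
  have hδ_sum (k : Fin N) : δ k = ∑ m ∈ range N, cycleEigenvector N k m * (-1) ^ m := by
    rw [hδ, ← Fin.sum_univ_eq_sum_range (fun m => cycleEigenvector N k m * (-1) ^ m)]
    exact sum_congr rfl fun m _ => by rw [hu, hΔy₁]; rfl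
  have hδ'_sum (k : Fin N) : δ' k = ∑ m ∈ range N, cycleEigenvector N k m := by
    rw [hδ', ← Fin.sum_univ_eq_sum_range (cycleEigenvector N k)]
    exact sum_congr rfl fun m _ => by rw [hu, hΔy₂, mul_one]; rfl
  refine ⟨fun i hi hiN => ?_, ?_, ?_⟩
  · obtain ⟨h, h'⟩ := sum_cycleEigenvector_of_middle hN hi hiN
    rw [hδ_sum, hδ'_sum, h, h']
  · obtain ⟨h, h'⟩ := sum_cycleEigenvector_zero hNeven
    rw [hδ_sum, hδ'_sum, hi0, h, h', sub_zero]
  · obtain ⟨h, h'⟩ := sum_cycleEigenvector_last hNeven (by have := i0.isLt; omega)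
    rw [hδ_sum, hδ'_sum, hiN, h, h', sub_zero]

theorem ring_graph_spectra_agree {n : ℕ} (hn : 1 ≤ n) (N : ℕ) (hN : N = 2 * n)
    (u : Fin N → Fin N → ℝ)
    (hu : ∀ k n' : Fin N,
      u k n' =
        if (k : ℕ) = 0 then 1 / Real.sqrt N
        else if (k : ℕ) = N - 1 then Real.cos (π * (n' : ℕ)) / Real.sqrt N
        else if Odd (k : ℕ) then
          Real.sin (π * ((k : ℕ) + 1) * (n' : ℕ) / N) / Real.sqrt (N / 2)
        else Real.cos (π * (k : ℕ) * (n' : ℕ) / N) / Real.sqrt (N / 2))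
    (Δy₁ Δy₂ : Fin N → ℝ)
    (hΔy₁ : ∀ i : Fin N, Δy₁ i = (-1 : ℝ) ^ (i : ℕ))
    (hΔy₂ : ∀ i : Fin N, Δy₂ i = 1)
    (δ δ' : Fin N → ℝ)
    (hδ : ∀ i, δ i = ∑ n', u i n' * Δy₁ n')
    (hδ' : ∀ i, δ' i = ∑ n', u i n' * Δy₂ n')
    (i0 iN : Fin N) (hi0 : (i0 : ℕ) = 0) (hiN : (iN : ℕ) = N - 1) :
    (∀ i : Fin N, 1 ≤ (i : ℕ) → (i : ℕ) ≤ N - 2 → δ i = δ' i) ∧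
    δ' i0 - δ i0 = Real.sqrt N ∧
    δ iN - δ' iN = Real.sqrt N :=
  ring_graph_spectra_agree_general N hN u hu Δy₁ Δy₂ hΔy₁ hΔy₂ δ δ' hδ hδ' i0 iN hi0 hiN
end
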